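/- Let m, n ≥ 1 be integers and let D be a real number with D ≥ 4m(n+2). Define φ : [0,m]^n → finite subsets of ℝ by φ((x_i)_i) = {4m(i−1) + x_i : i = 1,…,n} ∪ {D}. Then for all (x_i)_i, (y_i)_i ∈ [0,m]^n one has (1/2)·d_m^n((x_i)_i,(y_i)_i) ≤ d_EH(φ((x_i)_i), φ((y_i)_i)) ≤ d_m^n((x_i)_i,(y_i)_i); moreover, for every (x_i)_i ∈ [0,m]^n the diameter of φ((x_i)_i) lies in the interval [D − m, D]. -/
import Mathlib


open Metric

/-- The Euclidean–Hausdorff distance between two subsets of `ℝ`: the infimum over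
surjective isometries `f : ℝ → ℝ` of the Hausdorff distance `d_H(A, f(B))`. -/
noncomputable def dEH (A B : Set ℝ) : ℝ :=
  sInf {d : ℝ | ∃ f : ℝ → ℝ, Isometry f ∧ Function.Surjective f ∧
    d = hausdorffDist A (f '' B)}

/-- The map `φ_m^n : [0,m]^n → [ℝ]^{<ω}`, sending `(x_i)_{i=1,…,n}` to
`{4m(i-1) + x_i : i = 1,…,n} ∪ {D}` (indices `i : Fin n` are 0-based). -/
def phi (m n : ℕ) (D : ℝ) (x : Fin n → ℝ) : Set ℝ :=
  {t : ℝ | ∃ i : Fin n, t = 4 * (m : ℝ) * ((i : ℕ) : ℝ) + x i} ∪ {D}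

lemma phi_mem {m n : ℕ} {D : ℝ} {x : Fin n → ℝ} {a : ℝ} (ha : a ∈ phi m n D x) :
    (∃ i : Fin n, a = 4 * (m : ℝ) * ((i : ℕ) : ℝ) + x i) ∨ a = D := ha

lemma real_isometry_cases (f : ℝ → ℝ) (hf : Isometry f) :
    (∀ t, f t = t + f 0) ∨ (∀ t, f t = -t + f 0) := by
  have key : ∀ t s : ℝ, |f t - f s| = |t - s| := by
    intro t s
    have := hf.dist_eq t s
    rwa [Real.dist_eq, Real.dist_eq] at this
  have h0 : ∀ t : ℝ, f t - f 0 = t ∨ f t - f 0 = -t := by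
    intro t
    have h := key t 0
    rw [sub_zero] at h
    exact abs_eq_abs.mp h
  rcases h0 1 with h1 | h1
  · left
    intro t
    rcases h0 t with h | h
    · linarith
    · have hk := key t 1
      have e : f t - f 1 = -t - 1 := by linarith
      rw [e] at hk
      have ht : t = 0 := by
        rcases abs_eq_abs.mp hk with h' | h' <;> linarith
      rw [ht] at h ⊢; linarith
  · right
    intro t
    rcases h0 t with h | h
    · have hk := key t 1
      have e : f t - f 1 = t + 1 := by linarith
      rw [e] at hk
      have ht : t = 0 := by
        rcases abs_eq_abs.mp hk with h' | h' <;> linarith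
      rw [ht] at h ⊢; linarith
    · linarith

lemma phi_finite (m n : ℕ) (D : ℝ) (x : Fin n → ℝ) : (phi m n D x).Finite := by
  apply Set.Finite.union
  · apply Set.Finite.subset (Set.finite_range fun i : Fin n => 4 * (m : ℝ) * ((i : ℕ) : ℝ) + x i)
    rintro t ⟨i, ht⟩
    exact ⟨i, ht.symm⟩
  · exact Set.finite_singleton D

lemma phi_nonempty (m n : ℕ) (D : ℝ) (x : Fin n → ℝ) : (phi m n D x).Nonempty :=
  ⟨D, Or.inr rfl⟩

lemma exists_close_left {A B : Set ℝ} (hA : A.Finite) (hB : B.Finite)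
    (hAne : A.Nonempty) (hBne : B.Nonempty) {a : ℝ} (ha : a ∈ A) :
    ∃ b ∈ B, dist a b ≤ hausdorffDist A B := by
  have hne : EMetric.hausdorffEdist A B ≠ ⊤ :=
    hausdorffEdist_ne_top_of_nonempty_of_bounded hAne hBne hA.isBounded hB.isBounded
  have h1 : infDist a B ≤ hausdorffDist A B :=
    infDist_le_hausdorffDist_of_mem ha hne
  obtain ⟨b, hb, hbd⟩ := hB.isCompact.exists_infDist_eq_dist hBne a
  exact ⟨b, hb, by rw [← hbd]; exact h1⟩

lemma exists_close_right {A B : Set ℝ} (hA : A.Finite) (hB : B.Finite)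
    (hAne : A.Nonempty) (hBne : B.Nonempty) {b : ℝ} (hb : b ∈ B) :
    ∃ a ∈ A, dist a b ≤ hausdorffDist A B := by
  obtain ⟨a, ha, had⟩ := exists_close_left hB hA hBne hAne hb
  exact ⟨a, ha, by rw [dist_comm, hausdorffDist_comm]; exact had⟩

/-- The key lower bound: for every isometry `f` of `ℝ`, each coordinate difference is at
most twice the Hausdorff distance between `phi x` and `f '' phi y`. -/
lemma phi_lower (m n : ℕ) (hm : 1 ≤ m) (hn : 1 ≤ n) (D : ℝ)
    (hD : 4 * (m : ℝ) * ((n : ℝ) + 2) ≤ D)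
    (x y : Fin n → ℝ) (hx : ∀ i, x i ∈ Set.Icc (0 : ℝ) m) (hy : ∀ i, y i ∈ Set.Icc (0 : ℝ) m)
    (f : ℝ → ℝ) (hf : Isometry f) :
    ∀ i : Fin n, |x i - y i| ≤ 2 * hausdorffDist (phi m n D x) (f '' phi m n D y) := by
  set M : ℝ := (m : ℝ) with hMdef
  have hM : (1 : ℝ) ≤ M := by rw [hMdef]; exact_mod_cast hm
  have hn1 : (1 : ℝ) ≤ (n : ℝ) := by exact_mod_cast hn
  set A : Set ℝ := phi m n D x with hA'
  set Bf : Set ℝ := f '' phi m n D y with hBf'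
  set r : ℝ := hausdorffDist A Bf with hr'
  have hr0 : 0 ≤ r := hausdorffDist_nonneg
  have hAfin : A.Finite := phi_finite m n D x
  have hBfin : Bf.Finite := (phi_finite m n D y).image f
  have hAne : A.Nonempty := phi_nonempty m n D x
  have hBne : Bf.Nonempty := (phi_nonempty m n D y).image f
  -- bounds on indices
  have hjb : ∀ j : Fin n, ((j : ℕ) : ℝ) ≤ (n : ℝ) - 1 := by
    intro j
    have h1 : (j : ℕ) + 1 ≤ n := j.is_lt
    have h2 : ((j : ℕ) : ℝ) + 1 ≤ (n : ℝ) := by exact_mod_cast h1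
    linarith
  have hjnn : ∀ j : Fin n, (0 : ℝ) ≤ ((j : ℕ) : ℝ) := fun j => Nat.cast_nonneg _
  have hjb4 : ∀ j : Fin n, 4 * M * ((j : ℕ) : ℝ) ≤ 4 * M * ((n : ℝ) - 1) := by
    intro j
    exact mul_le_mul_of_nonneg_left (hjb j) (by linarith)
  have hj04 : ∀ j : Fin n, (0 : ℝ) ≤ 4 * M * ((j : ℕ) : ℝ) := by
    intro j
    exact mul_nonneg (by linarith) (hjnn j)
  have hDn : 4 * M * ((n : ℝ) - 1) + 12 * M ≤ D := by
    have : 4 * M * ((n : ℝ) + 2) ≤ D := hD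
    nlinarith
  -- membership facts
  have memA : ∀ i : Fin n, (4 * M * ((i : ℕ) : ℝ) + x i) ∈ A := fun i => Or.inl ⟨i, rfl⟩
  have DmemA : D ∈ A := Or.inr rfl
  have memB : ∀ j : Fin n, (4 * M * ((j : ℕ) : ℝ) + y j) ∈ phi m n D y := fun j => Or.inl ⟨j, rfl⟩
  have DmemB : D ∈ phi m n D y := Or.inr rfl
  -- bounds for elements
  have aub : ∀ i : Fin n, 4 * M * ((i : ℕ) : ℝ) + x i ≤ 4 * M * ((n : ℝ) - 1) + M := by
    intro i; have h1 := hjb4 i; have h2 := (hx i).2; linarith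
  have alb : ∀ i : Fin n, 0 ≤ 4 * M * ((i : ℕ) : ℝ) + x i := by
    intro i; have h1 := hj04 i; have h2 := (hx i).1; linarith
  have bub : ∀ j : Fin n, 4 * M * ((j : ℕ) : ℝ) + y j ≤ 4 * M * ((n : ℝ) - 1) + M := by
    intro j; have h1 := hjb4 j; have h2 := (hy j).2; linarith
  have blb : ∀ j : Fin n, 0 ≤ 4 * M * ((j : ℕ) : ℝ) + y j := by
    intro j; have h1 := hj04 j; have h2 := (hy j).1; linarith
  have hD0 : (0 : ℝ) ≤ D := by nlinarith
  have aleD : ∀ a ∈ A, a ≤ D ∧ 0 ≤ a := by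
    intro a ha
    rcases phi_mem ha with ⟨i, rfl⟩ | rfl
    · exact ⟨by linarith [aub i], alb i⟩
    · exact ⟨le_rfl, hD0⟩
  have diffM : ∀ i : Fin n, |x i - y i| ≤ M := by
    intro i
    rw [abs_le]
    have h1 := (hx i).1; have h2 := (hx i).2; have h3 := (hy i).1; have h4 := (hy i).2
    exact ⟨by linarith, by linarith⟩
  rcases real_isometry_cases f hf with hc | hc
  · -- translation case: f t = t + c
    set c : ℝ := f 0 with hcdef
    have memBf : ∀ j : Fin n, (4 * M * ((j : ℕ) : ℝ) + y j + c) ∈ Bf :=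
      fun j => ⟨_, memB j, (hc _)⟩
    have DmemBf : (D + c) ∈ Bf := ⟨D, DmemB, hc D⟩
    have Bfchar : ∀ b ∈ Bf, (∃ j : Fin n, b = 4 * M * ((j : ℕ) : ℝ) + y j + c) ∨ b = D + c := by
      rintro b ⟨p, hp, rfl⟩
      rcases phi_mem hp with ⟨j, rfl⟩ | rfl
      · exact Or.inl ⟨j, hc _⟩
      · exact Or.inr (hc _)
    -- c ≤ r
    obtain ⟨a, haA, hd1⟩ := exists_close_right hAfin hBfin hAne hBne DmemBf
    rw [Real.dist_eq, abs_le] at hd1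
    have hc_le : c ≤ r := by
      have h1 := (aleD a haA).1
      linarith [hd1.1]
    -- -c ≤ r
    obtain ⟨b, hbB, hd2⟩ := exists_close_left hAfin hBfin hAne hBne DmemA
    have hbub : b ≤ D + c := by
      rcases Bfchar b hbB with ⟨j, rfl⟩ | rfl
      · linarith [bub j]
      · exact le_rfl
    rw [Real.dist_eq, abs_le] at hd2
    have hc_ge : -c ≤ r := by linarith [hd2.2]
    -- per coordinate
    intro i
    obtain ⟨b, hbB, hd3⟩ := exists_close_left hAfin hBfin hAne hBne (memA i)
    rw [Real.dist_eq, abs_le] at hd3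
    rcases Bfchar b hbB with ⟨j, hbj⟩ | hbD
    · rw [hbj] at hd3
      by_cases hij : j = i
      · subst hij
        rw [abs_le]
        exact ⟨by linarith [hd3.1], by linarith [hd3.2]⟩
      · have hMr : M ≤ 2 * r := by
          have hvij : (j : ℕ) ≠ (i : ℕ) := fun hh => hij (Fin.ext hh)
          rcases Nat.lt_or_ge (j : ℕ) (i : ℕ) with h | h
          · have h1 : ((j : ℕ) : ℝ) + 1 ≤ ((i : ℕ) : ℝ) := by exact_mod_cast h
            have h2 : 4 * M * ((j : ℕ) : ℝ) + 4 * M ≤ 4 * M * ((i : ℕ) : ℝ) := by nlinarith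
            have h3 := (hx i).1
            have h4 := (hy j).2
            linarith [hd3.2]
          · have hlt : (i : ℕ) < (j : ℕ) := by omega
            have h1 : ((i : ℕ) : ℝ) + 1 ≤ ((j : ℕ) : ℝ) := by exact_mod_cast hlt
            have h2 : 4 * M * ((i : ℕ) : ℝ) + 4 * M ≤ 4 * M * ((j : ℕ) : ℝ) := by nlinarith
            have h3 := (hx i).2
            have h4 := (hy j).1
            linarith [hd3.1]
        linarith [diffM i]
    · rw [hbD] at hd3
      have hMr : M ≤ 2 * r := by
        have h1 := aub i
        linarith [hd3.1]
      linarith [diffM i]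
  · -- reflection case: f t = -t + c
    set c : ℝ := f 0 with hcdef
    have memBf : ∀ j : Fin n, (-(4 * M * ((j : ℕ) : ℝ) + y j) + c) ∈ Bf :=
      fun j => ⟨_, memB j, hc _⟩
    have Bfchar : ∀ b ∈ Bf,
        (∃ j : Fin n, b = -(4 * M * ((j : ℕ) : ℝ) + y j) + c) ∨ b = -D + c := by
      rintro b ⟨p, hp, rfl⟩
      rcases phi_mem hp with ⟨j, rfl⟩ | rfl
      · exact Or.inl ⟨j, hc _⟩
      · exact Or.inr (hc _)
    -- c ≥ D - r
    obtain ⟨b, hbB, hd1⟩ := exists_close_left hAfin hBfin hAne hBne DmemA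
    have hble : b ≤ c := by
      rcases Bfchar b hbB with ⟨j, rfl⟩ | rfl
      · linarith [blb j]
      · linarith
    rw [Real.dist_eq, abs_le] at hd1
    have hcD : D - r ≤ c := by linarith [hd1.2]
    -- the element -(y 0) + c of Bf
    set i0 : Fin n := ⟨0, hn⟩ with hi0
    have hi0v : ((i0 : ℕ) : ℝ) = 0 := by simp [hi0]
    obtain ⟨a, haA, hd2⟩ := exists_close_right hAfin hBfin hAne hBne (memBf i0)
    rw [Real.dist_eq, abs_le] at hd2
    rw [hi0v] at hd2
    have hy0 : y i0 ≤ M := (hy i0).2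
    have hy0' : 0 ≤ y i0 := (hy i0).1
    have key2 : (M ≤ 2 * r) ∨ (-(y i0) + c - D ≥ -r ∧ -(y i0) + c - D ≤ r) := by
      rcases phi_mem haA with ⟨k, hk⟩ | haDeq
      · left
        have hk2 : a ≤ 4 * M * ((n : ℝ) - 1) + M := by rw [hk]; exact aub k
        linarith [hd2.1]
      · right
        rw [haDeq] at hd2
        exact ⟨by linarith [hd2.2], by linarith [hd2.1]⟩
    by_cases hn2 : 2 ≤ n
    · -- n ≥ 2 : use a_1, reflection is always bad
      set i1 : Fin n := ⟨1, hn2⟩ with hi1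
      have hi1v : ((i1 : ℕ) : ℝ) = 1 := by simp [hi1]
      intro i
      obtain ⟨b, hbB, hd3⟩ := exists_close_left hAfin hBfin hAne hBne (memA i1)
      rw [Real.dist_eq, abs_le] at hd3
      have hx1le : x i1 ≤ M := (hx i1).2
      have hx1ge : 0 ≤ x i1 := (hx i1).1
      have hMr : M ≤ 2 * r := by
        rcases key2 with h | h
        · exact h
        · rcases Bfchar b hbB with ⟨j, hbj⟩ | hbj <;> rw [hbj] at hd3
          · -- b = -(b_j) + c ≥ 11M - r, while a_1 ≤ 5M
            have hb1 : 11 * M - r ≤ -(4 * M * ((j : ℕ) : ℝ) + y j) + c := by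
              have := bub j
              linarith
            rw [hi1v] at hd3
            linarith [hd3.1]
          · -- b = -D + c ≤ M + r, while a_1 ≥ 4M
            have hb2 : -D + c ≤ M + r := by linarith [h.2]
            rw [hi1v] at hd3
            linarith [hd3.2]
      linarith [diffM i]
    · -- n = 1
      have hne1 : n = 1 := by omega
      intro i
      have hii0 : i = i0 := by
        have h1 := i.is_lt
        have h2 : (i0 : ℕ) = 0 := rfl
        apply Fin.ext
        omega
      subst hii0
      obtain ⟨b, hbB, hd4⟩ := exists_close_left hAfin hBfin hAne hBne (memA i0)
      rw [Real.dist_eq, abs_le] at hd4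
      rw [hi0v] at hd4
      have hx0le : x i0 ≤ M := (hx i0).2
      have hx0ge : 0 ≤ x i0 := (hx i0).1
      rcases Bfchar b hbB with ⟨j, hbj⟩ | hbj <;> rw [hbj] at hd4
      · -- b = -(b_j) + c ≥ 11M - r, while a_0 ≤ M : r is big
        have hb1 : 11 * M - r ≤ -(4 * M * ((j : ℕ) : ℝ) + y j) + c := by
          have := bub j
          linarith
        have hMr : M ≤ 2 * r := by linarith [hd4.1]
        linarith [diffM i0]
      · -- b = -D + c
        rcases key2 with h | h
        · linarith [diffM i0]
        · rw [abs_le]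
          exact ⟨by linarith [hd4.1, h.2], by linarith [hd4.2, h.1]⟩

theorem phi_coarse_embedding (m n : ℕ) (hm : 1 ≤ m) (hn : 1 ≤ n) (D : ℝ)
    (hD : 4 * (m : ℝ) * ((n : ℝ) + 2) ≤ D) :
    (∀ x y : Fin n → ℝ, (∀ i, x i ∈ Set.Icc (0 : ℝ) m) → (∀ i, y i ∈ Set.Icc (0 : ℝ) m) →
      (1 / 2) * dist x y ≤ dEH (phi m n D x) (phi m n D y) ∧
      dEH (phi m n D x) (phi m n D y) ≤ dist x y) ∧
    (∀ x : Fin n → ℝ, (∀ i, x i ∈ Set.Icc (0 : ℝ) m) →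
      diam (phi m n D x) ∈ Set.Icc (D - (m : ℝ)) D) := by
  have hM : (1 : ℝ) ≤ (m : ℝ) := by exact_mod_cast hm
  have hn1 : (1 : ℝ) ≤ (n : ℝ) := by exact_mod_cast hn
  have hD0 : (0 : ℝ) ≤ D := le_trans (by positivity) hD
  have hmD : (m : ℝ) ≤ D := by
    nlinarith [mul_nonneg (by linarith : (0:ℝ) ≤ (m:ℝ)) (by linarith : (0:ℝ) ≤ (n:ℝ) - 1)]
  constructor
  · intro x y hx hy
    have hidmem : hausdorffDist (phi m n D x) (phi m n D y) ∈
        {d : ℝ | ∃ f : ℝ → ℝ, Isometry f ∧ Function.Surjective f ∧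
          d = hausdorffDist (phi m n D x) (f '' (phi m n D y))} :=
      ⟨id, isometry_id, Function.surjective_id, by rw [Set.image_id]⟩
    constructor
    · -- lower bound
      apply le_csInf ⟨_, hidmem⟩
      rintro d ⟨f, hf, hfs, rfl⟩
      have key := phi_lower m n hm hn D hD x y hx hy f hf
      have h2 : dist x y ≤ 2 * hausdorffDist (phi m n D x) (f '' phi m n D y) := by
        have h0 : (0 : ℝ) ≤ 2 * hausdorffDist (phi m n D x) (f '' phi m n D y) := by
          have : (0:ℝ) ≤ hausdorffDist (phi m n D x) (f '' phi m n D y) := hausdorffDist_nonneg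
          linarith
        rw [dist_pi_le_iff h0]
        intro i
        rw [Real.dist_eq]
        exact key i
      linarith
    · -- upper bound
      have hub : hausdorffDist (phi m n D x) (phi m n D y) ≤ dist x y := by
        apply hausdorffDist_le_of_mem_dist dist_nonneg
        · intro a ha
          rcases phi_mem ha with ⟨i, rfl⟩ | haD
          · refine ⟨4 * (m : ℝ) * ((i : ℕ) : ℝ) + y i, Or.inl ⟨i, rfl⟩, ?_⟩
            rw [Real.dist_eq]
            have h1 : |x i - y i| ≤ dist x y := by
              rw [← Real.dist_eq]
              exact dist_le_pi_dist x y i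
            have he : 4 * (m : ℝ) * ((i : ℕ) : ℝ) + x i -
                (4 * (m : ℝ) * ((i : ℕ) : ℝ) + y i) = x i - y i := by ring
            rw [he]
            exact h1
          · exact ⟨D, Or.inr rfl, by rw [haD, dist_self]; exact dist_nonneg⟩
        · intro b hb
          rcases phi_mem hb with ⟨i, rfl⟩ | hbD
          · refine ⟨4 * (m : ℝ) * ((i : ℕ) : ℝ) + x i, Or.inl ⟨i, rfl⟩, ?_⟩
            rw [Real.dist_eq]
            have h1 : |x i - y i| ≤ dist x y := by
              rw [← Real.dist_eq]
              exact dist_le_pi_dist x y i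
            have he : 4 * (m : ℝ) * ((i : ℕ) : ℝ) + y i -
                (4 * (m : ℝ) * ((i : ℕ) : ℝ) + x i) = y i - x i := by ring
            rw [he, abs_sub_comm]
            exact h1
          · exact ⟨D, Or.inr rfl, by rw [hbD, dist_self]; exact dist_nonneg⟩
      have hbdd : BddBelow {d : ℝ | ∃ f : ℝ → ℝ, Isometry f ∧ Function.Surjective f ∧
          d = hausdorffDist (phi m n D x) (f '' (phi m n D y))} := by
        refine ⟨0, ?_⟩
        rintro d ⟨f, hf, hfs, rfl⟩
        exact hausdorffDist_nonneg
      calc dEH (phi m n D x) (phi m n D y) ≤ hausdorffDist (phi m n D x) (phi m n D y) :=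
            csInf_le hbdd hidmem
        _ ≤ dist x y := hub
  · intro x hx
    have hsub : phi m n D x ⊆ Set.Icc 0 D := by
      intro a ha
      rcases phi_mem ha with ⟨i, rfl⟩ | rfl
      · have hi : ((i : ℕ) : ℝ) ≤ (n : ℝ) - 1 := by
          have h1 : (i : ℕ) + 1 ≤ n := i.is_lt
          have h2 : ((i : ℕ) : ℝ) + 1 ≤ (n : ℝ) := by exact_mod_cast h1
          linarith
        have hi0 : (0 : ℝ) ≤ ((i : ℕ) : ℝ) := Nat.cast_nonneg _
        constructor
        · nlinarith [(hx i).1]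
        · nlinarith [(hx i).2,
            mul_nonneg (by positivity : (0:ℝ) ≤ 4 * (m:ℝ))
              (by linarith : (0:ℝ) ≤ (n : ℝ) - 1 - ((i : ℕ) : ℝ))]
      · exact ⟨hD0, le_rfl⟩
    rw [Set.mem_Icc]
    constructor
    · have h0 : (4 * (m : ℝ) * (((⟨0, hn⟩ : Fin n) : ℕ) : ℝ) + x ⟨0, hn⟩) ∈ phi m n D x :=
        Or.inl ⟨⟨0, hn⟩, rfl⟩
      have hDm : D ∈ phi m n D x := Or.inr rfl
      have hb : Bornology.IsBounded (phi m n D x) := (phi_finite m n D x).isBounded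
      have hdd := dist_le_diam_of_mem hb h0 hDm
      rw [Real.dist_eq] at hdd
      have hv : (((⟨0, hn⟩ : Fin n) : ℕ) : ℝ) = 0 := by simp
      rw [hv] at hdd
      have hx0 : x ⟨0, hn⟩ ≤ (m : ℝ) := (hx ⟨0, hn⟩).2
      have hx0' : 0 ≤ x ⟨0, hn⟩ := (hx ⟨0, hn⟩).1
      have habs : |4 * (m : ℝ) * 0 + x ⟨0, hn⟩ - D| = D - x ⟨0, hn⟩ := by
        rw [abs_of_nonpos (by linarith)]
        ring
      rw [habs] at hdd
      linarith
    · calc diam (phi m n D x) ≤ diam (Set.Icc 0 D) := diam_mono hsub (isBounded_Icc 0 D)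
        _ = D := by rw [Real.diam_Icc hD0]; ring
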